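/- For integers 0 < k < n, a real number α with 0 < α < k/n, and any ε with 0 < ε < 1/3, the integral ∫₀^{1/2} (-log(t² + ε))^{nα - k - 1} · t^{2k+1} / (t² + ε)^{k+1} dt is bounded above by 2^{nα - k - 1/2} · ∫₀^{5/6} (-log t)^{nα - k - 1} / t dt, which is finite. -/

import Mathlib

/-!
Substituting `u = √(t² + ε)` gives `du = t / u dt` and `-log u = -log (t² + ε) / 2`, and since
`t^(2k+1) / (t² + ε)^(k+1) ≤ t / (t² + ε)` the left integrand is at most `2^β` times the
pulled-back integrand `(-log u)^β / u`, where `β = nα - k - 1`. The substitution `v = -log u`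
turns `∫ (-log u)^β / u` into a tail integral of `v^β`, finite because `β < -1` follows from
`α < k / n`.
-/

open MeasureTheory Set

theorem lintegral_Ioo_neg_log_rpow_div_lt_top {β a : ℝ} (hβ : β < -1) (ha₀ : 0 < a)
    (ha₁ : a < 1) : ∫⁻ t in Ioo 0 a, ENNReal.ofReal ((-Real.log t) ^ β / t) < ⊤ := by
  have hderiv : ∀ t ∈ Ioo 0 a, HasDerivWithinAt (fun t => -Real.log t) (-t⁻¹) (Ioo 0 a) t :=
    fun t ht => (Real.hasDerivAt_log ht.1.ne').neg.hasDerivWithinAt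
  have hanti : AntitoneOn (fun t => -Real.log t) (Ioo 0 a) := fun s hs t _ hst =>
    neg_le_neg (Real.log_le_log hs.1 hst)
  have hsub : (fun t => -Real.log t) '' Ioo 0 a ⊆ Ioi (-Real.log a) := by
    rintro _ ⟨t, ht, rfl⟩
    exact neg_lt_neg (Real.log_lt_log ht.1 ht.2)
  calc ∫⁻ t in Ioo 0 a, ENNReal.ofReal ((-Real.log t) ^ β / t)
      = ∫⁻ u in (fun t => -Real.log t) '' Ioo 0 a, ENNReal.ofReal (u ^ β) := by
        rw [lintegral_image_eq_lintegral_deriv_mul_of_antitoneOn measurableSet_Ioo hderiv hanti]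
        refine setLIntegral_congr_fun measurableSet_Ioo fun t ht => ?_
        rw [neg_neg, ← ENNReal.ofReal_mul (inv_nonneg.2 ht.1.le), inv_mul_eq_div]
    _ ≤ ∫⁻ u in Ioi (-Real.log a), ENNReal.ofReal (u ^ β) := lintegral_mono_set hsub
    _ < ⊤ :=
        (integrableOn_Ioi_rpow_of_lt hβ (neg_pos.2 (Real.log_neg ha₀ ha₁))).setLIntegral_lt_top

theorem pow_two_mul_add_one_div_pow_le {t ε : ℝ} (ht : 0 ≤ t) (hε : 0 ≤ ε) (k : ℕ) :
    t ^ (2 * k + 1) / (t ^ 2 + ε) ^ (k + 1) ≤ t / (t ^ 2 + ε) := by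
  have hle : t ^ 2 / (t ^ 2 + ε) ≤ 1 := div_le_one_of_le₀ (by linarith) (by positivity)
  calc t ^ (2 * k + 1) / (t ^ 2 + ε) ^ (k + 1)
      = (t ^ 2 / (t ^ 2 + ε)) ^ k * (t / (t ^ 2 + ε)) := by
        rw [div_pow, div_mul_div_comm, ← pow_mul, ← pow_succ, ← pow_succ]
    _ ≤ t / (t ^ 2 + ε) :=
        mul_le_of_le_one_left (by positivity) (pow_le_one₀ (by positivity) hle)

theorem neg_log_rpow_mul_div_eq {s : ℝ} (hs₀ : 0 < s) (hs₁ : s ≤ 1) (β t : ℝ) :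
    (-Real.log s) ^ β * (t / s) =
      t / √s * (2 ^ β * ((-Real.log √s) ^ β / √s)) := by
  have hlog : -Real.log √s = -Real.log s / 2 := by rw [Real.log_sqrt hs₀.le]; ring
  have hsq : √s ^ 2 = s := Real.sq_sqrt hs₀.le
  have hsqrt : √s ≠ 0 := (Real.sqrt_pos.2 hs₀).ne'
  have h2 : (2 : ℝ) ^ β ≠ 0 := (Real.rpow_pos_of_pos two_pos β).ne'
  rw [hlog, Real.div_rpow (neg_nonneg.2 (Real.log_nonpos hs₀.le hs₁)) zero_le_two]
  field_simp
  rw [hsq]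

theorem lintegral_Ioo_neg_log_sq_add_le (β : ℝ) (k : ℕ) {ε b c : ℝ} (hε : 0 < ε)
    (hbc : √(b ^ 2 + ε) ≤ c) (hc : c ≤ 1) :
    ∫⁻ t in Ioo 0 b, ENNReal.ofReal
        ((-Real.log (t ^ 2 + ε)) ^ β * t ^ (2 * k + 1) / (t ^ 2 + ε) ^ (k + 1))
      ≤ ENNReal.ofReal (2 ^ β) * ∫⁻ u in Ioo 0 c, ENNReal.ofReal ((-Real.log u) ^ β / u) := by
  set φ : ℝ → ℝ := fun t => √(t ^ 2 + ε) with hφ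
  have hs : ∀ t, 0 < t ^ 2 + ε := fun t => by positivity
  set g : ℝ → ℝ := fun u => 2 ^ β * ((-Real.log u) ^ β / u) with hg
  have hφ_lt : ∀ t ∈ Ioo 0 b, φ t < c := fun t ht =>
    (Real.sqrt_lt_sqrt (by positivity) (by nlinarith [ht.1, ht.2])).trans_le hbc
  have hderiv : ∀ t ∈ Ioo 0 b, HasDerivWithinAt φ (t / φ t) (Ioo 0 b) t := by
    intro t ht
    have h : HasDerivAt (fun t => t ^ 2 + ε) (2 * t) t := by
      simpa using (hasDerivAt_pow 2 t).add_const ε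
    have hφ' := (h.sqrt (hs t).ne').hasDerivWithinAt (s := Ioo 0 b)
    rwa [mul_div_mul_left _ _ two_ne_zero] at hφ'
  have hmono : MonotoneOn φ (Ioo 0 b) := fun u hu t _ hut =>
    Real.sqrt_le_sqrt (by nlinarith [hu.1])
  have hsub : φ '' Ioo 0 b ⊆ Ioo 0 c := by
    rintro _ ⟨t, ht, rfl⟩
    exact ⟨Real.sqrt_pos.2 (hs t), hφ_lt t ht⟩
  have hpoint : ∀ t ∈ Ioo 0 b,
      (-Real.log (t ^ 2 + ε)) ^ β * t ^ (2 * k + 1) / (t ^ 2 + ε) ^ (k + 1)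
        ≤ t / φ t * g (φ t) := by
    intro t ht
    have hs₁ : t ^ 2 + ε ≤ 1 := Real.sqrt_le_one.1 ((hφ_lt t ht).le.trans hc)
    rw [hφ, hg, ← neg_log_rpow_mul_div_eq (hs t) hs₁, mul_div_assoc]
    exact mul_le_mul_of_nonneg_left (pow_two_mul_add_one_div_pow_le ht.1.le hε.le k)
      (Real.rpow_nonneg (neg_nonneg.2 (Real.log_nonpos (hs t).le hs₁)) β)
  calc _ ≤ ∫⁻ t in Ioo 0 b, ENNReal.ofReal (t / φ t) * ENNReal.ofReal (g (φ t)) := by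
        refine setLIntegral_mono' measurableSet_Ioo fun t ht => ?_
        rw [← ENNReal.ofReal_mul (div_nonneg ht.1.le (Real.sqrt_nonneg _))]
        exact ENNReal.ofReal_le_ofReal (hpoint t ht)
    _ = ∫⁻ u in φ '' Ioo 0 b, ENNReal.ofReal (g u) :=
        (lintegral_image_eq_lintegral_deriv_mul_of_monotoneOn measurableSet_Ioo hderiv hmono
          (fun u => ENNReal.ofReal (g u))).symm
    _ ≤ ∫⁻ u in Ioo 0 c, ENNReal.ofReal (g u) := lintegral_mono_set hsub
    _ = _ := by
        simp_rw [hg, ENNReal.ofReal_mul (Real.rpow_nonneg zero_le_two β)]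
        exact lintegral_const_mul' _ _ ENNReal.ofReal_ne_top

theorem stmt0_general (n k : ℕ) (hkn : k < n) (α : ℝ)
    (hα : α < (k : ℝ) / n) (ε : ℝ) (hε0 : 0 < ε) (hε : ε < 1/3) :
    (∫⁻ t in Ioo (0:ℝ) (1/2),
        ENNReal.ofReal ((-Real.log (t^2 + ε)) ^ ((n : ℝ) * α - k - 1) * t ^ (2*k+1)
          / (t^2 + ε) ^ (k+1)))
      ≤ ENNReal.ofReal ((2:ℝ) ^ ((n : ℝ) * α - k - 1/2)) *
        ∫⁻ t in Ioo (0:ℝ) (5/6), ENNReal.ofReal ((-Real.log t) ^ ((n : ℝ) * α - k - 1) / t) ∧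
    (∫⁻ t in Ioo (0:ℝ) (5/6), ENNReal.ofReal ((-Real.log t) ^ ((n : ℝ) * α - k - 1) / t)) < ⊤ := by
  have hn : (0 : ℝ) < n := by exact_mod_cast (Nat.zero_le k).trans_lt hkn
  have hβ : (n : ℝ) * α - k - 1 < -1 := by
    have := (lt_div_iff₀ hn).1 hα
    linarith
  have hsqrt : √((1 / 2) ^ 2 + ε) ≤ 5 / 6 := Real.sqrt_le_iff.2 ⟨by norm_num, by linarith⟩
  refine ⟨?_, lintegral_Ioo_neg_log_rpow_div_lt_top hβ (by norm_num) (by norm_num)⟩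
  calc _ ≤ ENNReal.ofReal (2 ^ ((n : ℝ) * α - k - 1)) * _ :=
        lintegral_Ioo_neg_log_sq_add_le _ k hε0 hsqrt (by norm_num)
    _ ≤ _ := by
        gcongr
        · norm_num
        · linarith

theorem stmt0 (n k : ℕ) (hk : 0 < k) (hkn : k < n) (α : ℝ) (hα0 : 0 < α)
    (hα : α < (k : ℝ) / n) (ε : ℝ) (hε0 : 0 < ε) (hε : ε < 1/3) :
    (∫⁻ t in Ioo (0:ℝ) (1/2),
        ENNReal.ofReal ((-Real.log (t^2 + ε)) ^ ((n : ℝ) * α - k - 1) * t ^ (2*k+1)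
          / (t^2 + ε) ^ (k+1)))
      ≤ ENNReal.ofReal ((2:ℝ) ^ ((n : ℝ) * α - k - 1/2)) *
        ∫⁻ t in Ioo (0:ℝ) (5/6), ENNReal.ofReal ((-Real.log t) ^ ((n : ℝ) * α - k - 1) / t) ∧
    (∫⁻ t in Ioo (0:ℝ) (5/6), ENNReal.ofReal ((-Real.log t) ^ ((n : ℝ) * α - k - 1) / t)) < ⊤ :=
  stmt0_general n k hkn α hα ε hε0 hε
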